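/- arXiv:2211.17006 — 3 statements merged into one kernel-verified Lean document; each statement's English description precedes it below -/
import Mathlib

section
/- Let (X, μ) be a probability space, let g : X → X be a measure-preserving map, let n ≥ 0 be an integer, and let φ : X → ℝ be a measurable function with φ(x) > 0 for every x. If the function x ↦ max(0, Log(φ(g^[n](x)) / φ(x))) is integrable with respect to μ, then the function x ↦ Log(φ(g^[n](x)) / φ(x)) is integrable with respect to μ and its integral equals 0. -/
/-!
Write `F = f ∘ T - f` with `f = log φ` and `T = g^[n]`. If `f` were integrable, `∫ F = 0`
would be immediate from invariance of `μ`; in general, truncate `f` at height `K`. The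
truncated differences `v_K` have integral `0`, converge to `F`, are dominated by `|F|` and
have positive part at most `F⁺`. Hence `∫ |v_K| = 2 ∫ v_K⁺ ≤ 2 ∫ F⁺`, Fatou's lemma makes `F`
integrable and dominated convergence gives `∫ F = lim ∫ v_K = 0`.
-/

open MeasureTheory Filter Topology

def clamp (K a : ℝ) : ℝ := max (-K) (min a K)

lemma clamp_mono (K : ℝ) : Monotone (clamp K) :=
  fun _ _ hab => max_le_max le_rfl (min_le_min hab le_rfl)

lemma continuous_clamp (K : ℝ) : Continuous (clamp K) :=
  continuous_const.max (continuous_id.min continuous_const)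

lemma abs_clamp_le {K : ℝ} (hK : 0 ≤ K) (a : ℝ) : |clamp K a| ≤ K :=
  abs_le.mpr ⟨le_max_left _ _, max_le (by linarith) (min_le_right _ _)⟩

lemma clamp_of_abs_le {K a : ℝ} (h : |a| ≤ K) : clamp K a = a := by
  rw [clamp, min_eq_left ((le_abs_self a).trans h),
    max_eq_right ((neg_le_neg h).trans (neg_abs_le a))]

lemma tendsto_clamp (a : ℝ) : Tendsto (fun K : ℕ => clamp K a) atTop (𝓝 a) :=
  tendsto_const_nhds.congr' <| (eventually_ge_atTop ⌈|a|⌉₊).mono fun _ hK =>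
    (clamp_of_abs_le ((Nat.le_ceil _).trans (by exact_mod_cast hK))).symm

lemma abs_clamp_sub_clamp_le (K a b : ℝ) : |clamp K a - clamp K b| ≤ |a - b| :=
  calc |clamp K a - clamp K b|
      = |max (min a K) (-K) - max (min b K) (-K)| := by rw [clamp, clamp, max_comm, max_comm (-K)]
    _ ≤ |min a K - min b K| := abs_max_sub_max_le_abs _ _ _
    _ ≤ max |a - b| |K - K| := abs_min_sub_min_le_max a K b K
    _ = |a - b| := by simp

lemma max_zero_clamp_sub_clamp_le (K a b : ℝ) :
    max 0 (clamp K a - clamp K b) ≤ max 0 (a - b) := by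
  refine max_le (le_max_left _ _) ?_
  rcases le_total a b with hab | hab
  · exact (sub_nonpos.mpr (clamp_mono K hab)).trans (le_max_left _ _)
  · calc clamp K a - clamp K b ≤ |clamp K a - clamp K b| := le_abs_self _
      _ ≤ |a - b| := abs_clamp_sub_clamp_le K a b
      _ = a - b := abs_of_nonneg (sub_nonneg.mpr hab)
      _ ≤ max 0 (a - b) := le_max_right _ _

namespace MeasureTheory

variable {α : Type*} [MeasurableSpace α] {μ : Measure α}

lemma integrable_clamp_comp [IsFiniteMeasure μ] {f : α → ℝ} (hf : AEStronglyMeasurable f μ)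
    (K : ℕ) : Integrable (fun x => clamp K (f x)) μ :=
  Integrable.of_bound (C := K)
    ((continuous_clamp K).comp_aestronglyMeasurable hf)
    (ae_of_all _ fun _ => abs_clamp_le (Nat.cast_nonneg K) _)

lemma MeasurePreserving.integral_comp_sub_eq_zero {T : α → α} (hT : MeasurePreserving T μ μ)
    {u : α → ℝ} (hu : Integrable u μ) : ∫ x, (u (T x) - u x) ∂μ = 0 := by
  have huT : Integrable (fun x => u (T x)) μ := hT.integrable_comp_of_integrable hu
  have hmap : ∫ x, u (T x) ∂μ = ∫ x, u x ∂μ := by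
    rw [← integral_map hT.aemeasurable (by rw [hT.map_eq]; exact hu.aestronglyMeasurable),
      hT.map_eq]
  rw [integral_sub huT hu, hmap, sub_self]

lemma integral_abs_eq_two_mul_integral_max_zero {v : α → ℝ} (hv : Integrable v μ)
    (h0 : ∫ x, v x ∂μ = 0) : ∫ x, |v x| ∂μ = 2 * ∫ x, max 0 (v x) ∂μ :=
  calc ∫ x, |v x| ∂μ = ∫ x, |v x| ∂μ + ∫ x, v x ∂μ := by rw [h0, add_zero]
    _ = ∫ x, (|v x| + v x) ∂μ := (integral_add hv.abs hv).symm
    _ = ∫ x, 2 * max 0 (v x) ∂μ := by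
        congr 1; funext x
        rcases le_total 0 (v x) with h | h
        · rw [abs_of_nonneg h, max_eq_right h]; ring
        · rw [abs_of_nonpos h, max_eq_left h]; ring
    _ = 2 * ∫ x, max 0 (v x) ∂μ := integral_const_mul _ _

lemma integrable_of_tendsto_of_integral_norm_le {E : Type*} [NormedAddCommGroup E]
    {f : ℕ → α → E} {g : α → E} (hf : ∀ n, Integrable (f n) μ)
    (hlim : ∀ᵐ x ∂μ, Tendsto (fun n => f n x) atTop (𝓝 (g x))) {C : ℝ}
    (hC : ∀ n, ∫ x, ‖f n x‖ ∂μ ≤ C) : Integrable g μ := by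
  have hfC : ∀ n, eLpNorm (f n) 1 μ ≤ ENNReal.ofReal C := fun n => by
    rw [eLpNorm_one_eq_lintegral_enorm, ← ofReal_integral_norm_eq_lintegral_enorm (hf n)]
    exact ENNReal.ofReal_le_ofReal (hC n)
  refine memLp_one_iff_integrable.mp ⟨aestronglyMeasurable_of_tendsto_ae _
    (fun n => (hf n).aestronglyMeasurable) hlim, ?_⟩
  calc eLpNorm g 1 μ ≤ atTop.liminf fun n => eLpNorm (f n) 1 μ :=
        Lp.eLpNorm_lim_le_liminf_eLpNorm (fun n => (hf n).aestronglyMeasurable) g hlim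
    _ ≤ ENNReal.ofReal C := liminf_le_of_frequently_le (Frequently.of_forall hfC)
        (isBoundedUnder_of ⟨0, fun _ => zero_le⟩)
    _ < ⊤ := ENNReal.ofReal_lt_top

theorem MeasurePreserving.integrable_comp_sub_and_integral_eq_zero [IsFiniteMeasure μ]
    {T : α → α} (hT : MeasurePreserving T μ μ) {f : α → ℝ} (hf : AEStronglyMeasurable f μ)
    (hpos : Integrable (fun x => max 0 (f (T x) - f x)) μ) :
    Integrable (fun x => f (T x) - f x) μ ∧ ∫ x, (f (T x) - f x) ∂μ = 0 := by
  set v : ℕ → α → ℝ := fun K x => clamp K (f (T x)) - clamp K (f x)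
  have hu_int := integrable_clamp_comp hf
  have hv_int K : Integrable (v K) μ := (hT.integrable_comp_of_integrable (hu_int K)).sub (hu_int K)
  have hv_zero K : ∫ x, v K x ∂μ = 0 := hT.integral_comp_sub_eq_zero (hu_int K)
  have hv_lim : ∀ᵐ x ∂μ, Tendsto (fun K => v K x) atTop (𝓝 (f (T x) - f x)) :=
    ae_of_all _ fun x => (tendsto_clamp _).sub (tendsto_clamp _)
  have hv_abs K : ∫ x, ‖v K x‖ ∂μ ≤ 2 * ∫ x, max 0 (f (T x) - f x) ∂μ := by
    simp only [Real.norm_eq_abs]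
    rw [integral_abs_eq_two_mul_integral_max_zero (hv_int K) (hv_zero K)]
    refine mul_le_mul_of_nonneg_left (integral_mono ?_ hpos fun x => ?_) zero_le_two
    · exact (hv_int K).pos_part.congr (ae_of_all _ fun x => max_comm _ _)
    · exact max_zero_clamp_sub_clamp_le K _ _
  have hF_int := integrable_of_tendsto_of_integral_norm_le hv_int hv_lim hv_abs
  have hv_integral_lim := tendsto_integral_of_dominated_convergence _
    (fun K => (hv_int K).aestronglyMeasurable) hF_int.abs
    (fun K => ae_of_all _ fun x => abs_clamp_sub_clamp_le K _ _) hv_lim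
  simp only [hv_zero] at hv_integral_lim
  exact ⟨hF_int, (tendsto_nhds_unique tendsto_const_nhds hv_integral_lim).symm⟩

end MeasureTheory

/-- Ledrappier–Strelcyn lemma: if the positive part of `log (φ ∘ g^[n] / φ)` is
integrable, then the whole function is integrable with integral zero. -/
theorem ledrappier_strelcyn {X : Type*} [MeasurableSpace X]
    (μ : Measure X) [IsProbabilityMeasure μ]
    (g : X → X) (hg : MeasurePreserving g μ μ) (n : ℕ)
    (φ : X → ℝ) (hφm : Measurable φ) (hφpos : ∀ x, 0 < φ x)
    (hint : Integrable (fun x => max 0 (Real.log (φ (g^[n] x) / φ x))) μ) :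
    Integrable (fun x => Real.log (φ (g^[n] x) / φ x)) μ ∧
      ∫ x, Real.log (φ (g^[n] x) / φ x) ∂μ = 0 := by
  have hlog x : Real.log (φ (g^[n] x) / φ x) = Real.log (φ (g^[n] x)) - Real.log (φ x) :=
    Real.log_div (hφpos _).ne' (hφpos x).ne'
  simp only [hlog] at hint ⊢
  exact (hg.iterate n).integrable_comp_sub_and_integral_eq_zero hφm.log.aestronglyMeasurable hint
end

section
/- Let E be a normed complex vector space, let f : E → E be everywhere complex-differentiable, and let A ⊆ E be a set with f(A) ⊆ A. Let v : E → E be a function such that for every x ∈ A one has ‖v(x)‖ = 1 and there exists a scalar c ∈ ℂ with (fderiv ℂ f x)(v(x)) = c • v(f(x)). Define Δ(x, n) := ‖(fderiv ℂ (f^[n]) x)(v(x))‖. Then for every x ∈ A and all natural numbers n, k one has Δ(x, n) · Δ(f^[n](x), k) = Δ(x, n + k). -/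
/-- Cocycle relation for the stable cocycle `Δ(x, n) = ‖d_x f^n · v(x)‖`:
`Δ(x, n) · Δ(f^[n] x, k) = Δ(x, n + k)` on a forward-invariant set `A` on which
`v` is a unit field with `d_x f (v x) ∈ ℂ · v (f x)`. -/
theorem stable_cocycle_relation {E : Type*} [NormedAddCommGroup E] [NormedSpace ℂ E]
    (f : E → E) (hf : Differentiable ℂ f) (A : Set E) (hA : Set.MapsTo f A A)
    (v : E → E) (hv_unit : ∀ x ∈ A, ‖v x‖ = 1)
    (hv_inv : ∀ x ∈ A, ∃ c : ℂ, (fderiv ℂ f x) (v x) = c • v (f x)) :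
    ∀ x ∈ A, ∀ n k : ℕ,
      ‖(fderiv ℂ (f^[n]) x) (v x)‖ * ‖(fderiv ℂ (f^[k]) (f^[n] x)) (v (f^[n] x))‖ =
        ‖(fderiv ℂ (f^[n + k]) x) (v x)‖ := by
  have hfn : ∀ n : ℕ, Differentiable ℂ (f^[n]) := fun n => hf.iterate n
  have hAn : ∀ x ∈ A, ∀ n : ℕ, f^[n] x ∈ A := fun x hx n => hA.iterate n hx
  -- key: derivative of iterate maps v x into the line through v (f^[n] x)
  have key : ∀ x ∈ A, ∀ n : ℕ, ∃ c : ℂ,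
      (fderiv ℂ (f^[n]) x) (v x) = c • v (f^[n] x) := by
    intro x hx n
    induction n with
    | zero =>
      refine ⟨1, ?_⟩
      simp [Function.iterate_zero, fderiv_id]
    | succ n ih =>
      obtain ⟨c, hc⟩ := ih
      obtain ⟨c', hc'⟩ := hv_inv (f^[n] x) (hAn x hx n)
      refine ⟨c * c', ?_⟩
      have hcomp : fderiv ℂ (f^[n + 1]) x =
          (fderiv ℂ f (f^[n] x)).comp (fderiv ℂ (f^[n]) x) := by
        rw [Function.iterate_succ']
        exact fderiv_comp x (hf _) (hfn n _)
      rw [hcomp]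
      simp only [ContinuousLinearMap.comp_apply, hc, map_smul, hc',
        Function.iterate_succ_apply', smul_smul]
  intro x hx n k
  obtain ⟨c, hc⟩ := key x hx n
  have hcomp : fderiv ℂ (f^[n + k]) x =
      (fderiv ℂ (f^[k]) (f^[n] x)).comp (fderiv ℂ (f^[n]) x) := by
    rw [add_comm, Function.iterate_add]
    exact fderiv_comp x (hfn k _) (hfn n _)
  rw [hcomp]
  simp only [ContinuousLinearMap.comp_apply, hc, map_smul, norm_smul]
  rw [hv_unit _ (hAn x hx n), mul_one]
end

section
/- Let (X, μ) be a probability space, let (ψ_n)_{n∈ℕ} be a sequence of measurable functions ψ_n : X → ℝ, let ε > 0, and let α < β be real numbers. Then there exists a Borel set S ⊆ [α, β] of full Lebesgue measure in [α, β] such that for every s ∈ S there exists a measurable function γ : X → (0, 1] with the property that for μ-almost every x ∈ X and every n ∈ ℕ, |ψ_n(x) − s| ≥ γ(x) · e^{−nε}. -/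
/-! Fubini gives `∫ μ {x | |ψ n x - s| < r} ds = 2r`. With the summable radii
`r n = e^{-nε/2}`, for Lebesgue-a.e. `s` the measures `μ {x | |ψ n x - s| < r n}` are summable,
and Borel–Cantelli shows that `μ`-a.e. `x` eventually satisfies `|ψ n x - s| ≥ r n`, i.e.
`|ψ n x - s| e^{nε} ≥ e^{nε/2} ≥ 1`. Discarding also the countably many atoms of the laws of the
`ψ n`, the sequence `|ψ n x - s| e^{nε}` is positive and eventually `≥ 1`, so its infimum over `n`
is a positive measurable `γ x`. -/

open MeasureTheory Filter Set

section SlowApproach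

variable {X : Type*} [MeasurableSpace X] {μ : Measure X}

theorem measurableSet_abs_sub_fst_lt {f : X → ℝ} (hf : Measurable f) (r : ℝ) :
    MeasurableSet {p : ℝ × X | |f p.2 - p.1| < r} :=
  measurableSet_lt ((hf.comp measurable_snd).sub measurable_fst).abs measurable_const

theorem lintegral_measure_abs_sub_lt [SFinite μ] {f : X → ℝ} (hf : Measurable f) (r : ℝ) :
    ∫⁻ s, μ {x | |f x - s| < r} = ENNReal.ofReal (2 * r) * μ univ := by
  have hE := measurableSet_abs_sub_fst_lt hf r
  have hball : ∀ x, {s | |f x - s| < r} = Metric.ball (f x) r := fun x => by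
    ext s; simp [Real.dist_eq, abs_sub_comm]
  calc ∫⁻ s, μ {x | |f x - s| < r}
      = (volume.prod μ) {p : ℝ × X | |f p.2 - p.1| < r} := (Measure.prod_apply hE).symm
    _ = ∫⁻ x, volume {s | |f x - s| < r} ∂μ := Measure.prod_apply_symm hE
    _ = ENNReal.ofReal (2 * r) * μ univ := by simp [hball, Real.volume_ball]

theorem measurable_measure_abs_sub_lt [SFinite μ] {f : X → ℝ} (hf : Measurable f) (r : ℝ) :
    Measurable fun s => μ {x | |f x - s| < r} :=
  measurable_measure_prodMk_left (measurableSet_abs_sub_fst_lt hf r)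

theorem ae_ae_eventually_le_abs_sub [IsFiniteMeasure μ] {ψ : ℕ → X → ℝ}
    (hψ : ∀ n, Measurable (ψ n)) {r : ℕ → ℝ} (hr : Summable r) :
    ∀ᵐ s, ∀ᵐ x ∂μ, ∀ᶠ n in atTop, r n ≤ |ψ n x - s| := by
  have hsum : ∫⁻ s, ∑' n, μ {x | |ψ n x - s| < r n} ≠ ⊤ := by
    rw [lintegral_tsum fun n => (measurable_measure_abs_sub_lt (hψ n) (r n)).aemeasurable]
    simp only [lintegral_measure_abs_sub_lt (hψ _), ENNReal.tsum_mul_right]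
    exact ENNReal.mul_ne_top ((hr.mul_left 2).tsum_ofReal_ne_top) (measure_ne_top μ univ)
  filter_upwards [ae_lt_top (.tsum fun n => measurable_measure_abs_sub_lt (hψ n) (r n))
    hsum] with s hs
  filter_upwards [ae_eventually_notMem hs.ne] with x hx
  simpa using hx

theorem ae_forall_measure_level_set_eq_zero [SFinite μ] {ψ : ℕ → X → ℝ}
    (hψ : ∀ n, Measurable (ψ n)) : ∀ᵐ s, ∀ n, μ {x | ψ n x = s} = 0 := by
  refine ae_all_iff.2 fun n => ?_
  have hnull := (Measure.countable_meas_level_set_pos (μ := μ) (hψ n)).measure_zero volume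
  filter_upwards [measure_eq_zero_iff_ae_notMem.1 hnull] with s hs
  simpa using hs

theorem exists_pos_forall_le_of_eventually_le {a : ℕ → ℝ} (hpos : ∀ n, 0 < a n) {c : ℝ}
    (hc : 0 < c) (hev : ∀ᶠ n in atTop, c ≤ a n) : ∃ b > 0, ∀ n, b ≤ a n := by
  obtain ⟨N, hN⟩ := eventually_atTop.1 hev
  obtain ⟨m, -, hm⟩ := (Finset.range N.succ).exists_min_image a ⟨0, by simp⟩
  refine ⟨min c (a m), lt_min hc (hpos m), fun n => ?_⟩
  rcases lt_or_ge n N with hn | hn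
  · exact (min_le_right _ _).trans (hm n (Finset.mem_range.2 (hn.trans N.lt_succ_self)))
  · exact (min_le_left _ _).trans (hN n hn)

theorem exists_measurable_pos_le_of_ae {d : ℕ → X → ℝ} (hd : ∀ n, Measurable (d n))
    (h : ∀ᵐ x ∂μ, (∀ n, 0 < d n x) ∧ ∀ᶠ n in atTop, 1 ≤ d n x) :
    ∃ γ : X → ℝ, Measurable γ ∧ (∀ x, γ x ∈ Ioc (0 : ℝ) 1) ∧
      ∀ᵐ x ∂μ, ∀ n, γ x ≤ d n x := by
  set g : X → ℝ := fun x => ⨅ n, d n x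
  have hg : Measurable g := .iInf hd
  refine ⟨fun x => if 0 < g x then min 1 (g x) else 1,
    .ite (measurableSet_lt measurable_const hg) (measurable_const.min hg) measurable_const,
    fun x => ?_, ?_⟩
  · dsimp only
    split_ifs with hx
    · exact ⟨lt_min one_pos hx, min_le_left _ _⟩
    · exact ⟨one_pos, le_rfl⟩
  · filter_upwards [h] with x ⟨hpos, hev⟩ n
    obtain ⟨b, hb, hba⟩ := exists_pos_forall_le_of_eventually_le hpos one_pos hev
    have hgx : 0 < g x := hb.trans_le (le_ciInf hba)
    simp only [if_pos hgx]
    exact (min_le_right _ _).trans (ciInf_le ⟨0, by rintro _ ⟨k, rfl⟩; exact (hpos k).le⟩ n)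

theorem ae_exists_measurable_mul_exp_le_abs_sub [IsFiniteMeasure μ] {ψ : ℕ → X → ℝ}
    (hψ : ∀ n, Measurable (ψ n)) {ε : ℝ} (hε : 0 < ε) :
    ∀ᵐ s, ∃ γ : X → ℝ, Measurable γ ∧ (∀ x, γ x ∈ Ioc (0 : ℝ) 1) ∧
      ∀ᵐ x ∂μ, ∀ n : ℕ, γ x * Real.exp (-(n : ℝ) * ε) ≤ |ψ n x - s| := by
  set r : ℕ → ℝ := fun n => Real.exp (n * (-(ε / 2)))
  have hr : Summable r := Real.summable_exp_nat_mul_iff.2 (by linarith)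
  have hr_mul : ∀ n : ℕ, 1 ≤ r n * Real.exp (n * ε) := fun n => by
    rw [← Real.exp_add, Real.one_le_exp_iff]
    nlinarith [n.cast_nonneg (α := ℝ)]
  filter_upwards [ae_ae_eventually_le_abs_sub (μ := μ) hψ hr,
    ae_forall_measure_level_set_eq_zero (μ := μ) hψ] with s hfar hatom
  have hne : ∀ᵐ x ∂μ, ∀ n, ψ n x ≠ s :=
    ae_all_iff.2 fun n => measure_eq_zero_iff_ae_notMem.1 (hatom n)
  obtain ⟨γ, hγ, hγ_mem, hγ_le⟩ :=
    exists_measurable_pos_le_of_ae (μ := μ) (d := fun n x => |ψ n x - s| * Real.exp (n * ε))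
      (fun n => ((hψ n).sub_const s).abs.mul_const _) <| by
      filter_upwards [hfar, hne] with x hx hxs
      refine ⟨fun n => mul_pos (abs_pos.2 (sub_ne_zero.2 (hxs n))) (Real.exp_pos _),
        hx.mono fun n hn => (hr_mul n).trans ?_⟩
      exact mul_le_mul_of_nonneg_right hn (Real.exp_pos _).le
  refine ⟨γ, hγ, hγ_mem, hγ_le.mono fun x hx n => ?_⟩
  rw [neg_mul, Real.exp_neg, ← div_eq_mul_inv, div_le_iff₀ (Real.exp_pos _)]
  exact hx n

end SlowApproach

theorem slow_approach_of_almost_every_radius_general {X : Type*} [MeasurableSpace X]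
    (μ : Measure X) [IsProbabilityMeasure μ]
    (ψ : ℕ → X → ℝ) (hψ : ∀ n, Measurable (ψ n))
    (ε : ℝ) (hε : 0 < ε) (α β : ℝ) :
    ∃ S : Set ℝ, MeasurableSet S ∧ S ⊆ Set.Icc α β ∧
      volume (Set.Icc α β \ S) = 0 ∧
      ∀ s ∈ S, ∃ γ : X → ℝ, Measurable γ ∧ (∀ x, γ x ∈ Set.Ioc (0 : ℝ) 1) ∧
        ∀ᵐ x ∂μ, ∀ n : ℕ, |ψ n x - s| ≥ γ x * Real.exp (-(n : ℝ) * ε) := by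
  obtain ⟨T, hT, hT_meas, hT_good⟩ :=
    (ae_exists_measurable_mul_exp_le_abs_sub (μ := μ) hψ hε).exists_measurable_mem
  exact ⟨Set.Icc α β ∩ T, measurableSet_Icc.inter hT_meas, Set.inter_subset_left,
    measure_mono_null (fun s hs hsT => hs.2 ⟨hs.1, hsT⟩) (mem_ae_iff.1 hT),
    fun s hs => hT_good s hs.2⟩

/-- Borel–Cantelli content of Dupont's lemma: for Lebesgue-almost every
`s ∈ [α, β]`, the sequence `ψ n x` approaches `s` at most at exponentially small
speed `γ(x) e^{-nε}`, for `μ`-almost every `x`. -/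
theorem slow_approach_of_almost_every_radius {X : Type*} [MeasurableSpace X]
    (μ : Measure X) [IsProbabilityMeasure μ]
    (ψ : ℕ → X → ℝ) (hψ : ∀ n, Measurable (ψ n))
    (ε : ℝ) (hε : 0 < ε) (α β : ℝ) (hαβ : α < β) :
    ∃ S : Set ℝ, MeasurableSet S ∧ S ⊆ Set.Icc α β ∧
      volume (Set.Icc α β \ S) = 0 ∧
      ∀ s ∈ S, ∃ γ : X → ℝ, Measurable γ ∧ (∀ x, γ x ∈ Set.Ioc (0 : ℝ) 1) ∧
        ∀ᵐ x ∂μ, ∀ n : ℕ, |ψ n x - s| ≥ γ x * Real.exp (-(n : ℝ) * ε) :=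
  slow_approach_of_almost_every_radius_general μ ψ hψ ε hε α β
end
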